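/- arXiv:1704.06333 — 5 statements merged into one kernel-verified Lean document; each statement's English description precedes it below -/
import Mathlib

section
/- Let K ≥ 1 be an integer, let s ≥ 0, i ≥ 0, n > 0 be real numbers, and let t ∈ (0, 1] satisfy t·(i + n) ≥ K·n. Then log₂(1 + s/(i + n)) − log₂(1 + (t·s)/(t·i + n)) ≤ log₂(1 + 1/K), i.e., the per-user rate loss of the power-reduced private message relative to the full-power NoRS message is at most log₂(1 + 1/K). -/
/-!
Since `t s / (t i + n) = s / (i + n / t)`, the private message sees the same signal as the NoRS
message against the larger effective denominator `i + n / t`. The condition `t (i + n) ≥ K n`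
says `n / t ≤ (i + n) / K`, so that denominator exceeds `i + n` by at most a factor `1 + 1/K`;
hence so does the ratio of the two SINR terms `1 + s / (·)`, and the rate loss is at most
`log₂ (1 + 1/K)`.
-/

open Real

theorem one_add_div_le_mul_one_add_div {s a b c : ℝ} (hs : 0 ≤ s) (hb : 0 < b)
    (hba : b ≤ c * a) (hc : 1 ≤ c) : 1 + s / a ≤ c * (1 + s / b) := by
  have hc0 : 0 < c := by linarith
  have ha : 0 < a := pos_of_mul_pos_right (hb.trans_le hba) hc0.le
  have hsig : s / a ≤ c * (s / b) :=
    calc s / a = c * s / (c * a) := (mul_div_mul_left s a hc0.ne').symm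
      _ ≤ c * s / b := div_le_div_of_nonneg_left (by positivity) hb hba
      _ = c * (s / b) := mul_div_assoc c s b
  linarith

theorem Real.logb_sub_logb_le_logb_of_le_mul {b x y c : ℝ} (hb : 1 < b) (hx : 0 < x)
    (hy : 0 < y) (hxy : x ≤ c * y) : logb b x - logb b y ≤ logb b c := by
  have hc : 0 < c := pos_of_mul_pos_left (hx.trans_le hxy) hy.le
  rw [sub_le_iff_le_add, ← logb_mul hc.ne' hy.ne']
  exact logb_le_logb_of_le hb hx hxy

/-- If the power-splitting ratio `t ∈ (0,1]` satisfies `t (i + n) ≥ K n`, then the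
per-user rate loss of the power-reduced private message relative to the full-power
NoRS message is at most `log₂(1 + 1/K)`. -/
theorem stmt_4 (K : ℕ) (hK : 1 ≤ K) (s i n t : ℝ)
    (hs : 0 ≤ s) (hi : 0 ≤ i) (hn : 0 < n) (ht : t ∈ Set.Ioc (0 : ℝ) 1)
    (hcond : (K : ℝ) * n ≤ t * (i + n)) :
    Real.logb 2 (1 + s / (i + n)) - Real.logb 2 (1 + t * s / (t * i + n))
      ≤ Real.logb 2 (1 + 1 / (K : ℝ)) := by
  obtain ⟨ht0, -⟩ := ht
  have hK0 : (0 : ℝ) < K := by exact_mod_cast hK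
  have hprivate : t * s / (t * i + n) = s / (i + n / t) := by field_simp
  have hnt : n / t ≤ (i + n) / K := by
    rw [div_le_div_iff₀ ht0 hK0]
    linarith
  have heff : i + n / t ≤ (1 + 1 / (K : ℝ)) * (i + n) := by
    have : (1 + 1 / (K : ℝ)) * (i + n) = i + n + (i + n) / K := by ring
    linarith
  have hgain : 1 + s / (i + n) ≤ (1 + 1 / (K : ℝ)) * (1 + s / (i + n / t)) :=
    one_add_div_le_mul_one_add_div hs (by positivity) heff (by simp)
  rw [hprivate]
  exact logb_sub_logb_le_logb_of_le_mul one_lt_two (by positivity) (by positivity) hgain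
end

section
/- Let K ≥ 1 be an integer, let s_j ≥ 0, i_j ≥ 0 for j = 1, …, K and n > 0 be real numbers, and let t ∈ (0, 1] satisfy t·(i_j + n) ≥ K·n for every j. Then Σ_{j=1}^{K} [ log₂(1 + s_j/(i_j + n)) − log₂(1 + (t·s_j)/(t·i_j + n)) ] ≤ log₂ e, i.e., the total sum-rate loss of the private messages of the RS scheme relative to the conventional NoRS scheme is at most log₂ e. -/
open Finset

/-- If the power-splitting ratio `t ∈ (0,1]` satisfies `t (i_j + n) ≥ K n` for every
user `j`, then the total sum-rate loss of the private messages of the RS scheme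
relative to the conventional NoRS scheme is at most `log₂ e`. -/
theorem stmt_5 (K : ℕ) (hK : 1 ≤ K) (s i : Fin K → ℝ) (n t : ℝ)
    (hs : ∀ j, 0 ≤ s j) (hi : ∀ j, 0 ≤ i j) (hn : 0 < n)
    (ht : t ∈ Set.Ioc (0 : ℝ) 1)
    (hcond : ∀ j, (K : ℝ) * n ≤ t * (i j + n)) :
    ∑ j, (Real.logb 2 (1 + s j / (i j + n))
        - Real.logb 2 (1 + t * s j / (t * i j + n)))
      ≤ Real.logb 2 (Real.exp 1) := by
  have hKpos : (0:ℝ) < K := by exact_mod_cast hK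
  set c : ℝ := 1 + 1 / K with hc
  clear_value c
  have hc1 : (1:ℝ) ≤ c := by
    have h : 0 < 1 / (K:ℝ) := by positivity
    rw [hc]; linarith
  have hcpos : 0 < c := by linarith
  -- per-user bound
  have hterm : ∀ j, Real.logb 2 (1 + s j / (i j + n))
      - Real.logb 2 (1 + t * s j / (t * i j + n)) ≤ Real.logb 2 c := by
    intro j
    have hb : 0 < i j + n := by linarith [hi j]
    have hd : 0 < t * i j + n := by nlinarith [ht.1, hi j]
    have hnum : s j * (t * i j + n) * K ≤ ((K:ℝ) + 1) * (t * s j) * (i j + n) := by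
      have h1 := hcond j
      have h2 : 0 ≤ s j * (t * (i j + n) - K * n) :=
        mul_nonneg (hs j) (by linarith)
      have h3 : 0 ≤ (K:ℝ) * (t * (s j * n)) :=
        mul_nonneg hKpos.le (mul_nonneg ht.1.le (mul_nonneg (hs j) hn.le))
      nlinarith
    have hnum' : s j * (t * i j + n) ≤ c * (t * s j) * (i j + n) := by
      rw [hc]
      have he : (1 + 1 / (K:ℝ)) = ((K:ℝ) + 1) / K := by
        field_simp
      rw [he, div_mul_eq_mul_div, div_mul_eq_mul_div, le_div_iff₀ hKpos]
      exact hnum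
    have hfrac : s j / (i j + n) ≤ c * (t * s j / (t * i j + n)) := by
      rw [div_le_iff₀ hb, mul_div_assoc', div_mul_eq_mul_div, le_div_iff₀ hd]
      nlinarith [hnum']
    have hle : 1 + s j / (i j + n) ≤ c * (1 + t * s j / (t * i j + n)) := by
      have h0 : 0 ≤ t * s j / (t * i j + n) :=
        div_nonneg (mul_nonneg ht.1.le (hs j)) hd.le
      have he : c * (1 + t * s j / (t * i j + n))
          = c + c * (t * s j / (t * i j + n)) := by ring
      rw [he]
      linarith [hfrac, hc1]
    have hx : 0 < 1 + s j / (i j + n) := by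
      have := div_nonneg (hs j) hb.le; linarith
    have hy : 0 < 1 + t * s j / (t * i j + n) := by
      have := div_nonneg (mul_nonneg ht.1.le (hs j)) hd.le; linarith
    have := Real.logb_le_logb_of_le (b := 2) (by norm_num) hx hle
    rw [Real.logb_mul (ne_of_gt hcpos) (ne_of_gt hy)] at this
    linarith [this]
  calc ∑ j, (Real.logb 2 (1 + s j / (i j + n))
        - Real.logb 2 (1 + t * s j / (t * i j + n)))
      ≤ ∑ _j : Fin K, Real.logb 2 c := Finset.sum_le_sum (fun j _ => hterm j)
    _ = (K:ℝ) * Real.logb 2 c := by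
        rw [Finset.sum_const, Finset.card_univ, Fintype.card_fin, nsmul_eq_mul]
    _ = Real.logb 2 (c ^ K) := (Real.logb_pow 2 c K).symm
    _ ≤ Real.logb 2 (Real.exp 1) := by
        apply Real.logb_le_logb_of_le (by norm_num) (by positivity)
        have h1 : c ≤ Real.exp (1 / K) := by
          have := Real.add_one_le_exp (1 / (K:ℝ))
          linarith
        calc c ^ K ≤ (Real.exp (1 / K)) ^ K :=
              pow_le_pow_left₀ hcpos.le h1 K
          _ = Real.exp ((K:ℝ) * (1 / K)) := (Real.exp_nat_mul _ K).symm
          _ = Real.exp 1 := by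
              congr 1
              field_simp
end

section
/- Let z < 0 be a real number, let B be an M × M Hermitian positive semidefinite complex matrix, let A be any M × M complex matrix, and let x ∈ ℂ^M. Then both B − z·I and B + x·xᴴ − z·I are invertible and |tr( ((B − z·I)⁻¹ − (B + x·xᴴ − z·I)⁻¹) · A )| ≤ ‖A‖ / |z|, where ‖A‖ denotes the spectral (operator ℓ²→ℓ²) norm of A. -/
open Matrix
open scoped ComplexOrder

variable {M : ℕ}

lemma auxA_vecMulVec_mulVec (x y v : Fin M → ℂ) :
    vecMulVec x y *ᵥ v = (y ⬝ᵥ v) • x := by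
  funext i
  simp only [mulVec, vecMulVec_apply, dotProduct, Pi.smul_apply, smul_eq_mul, Finset.sum_mul]
  exact Finset.sum_congr rfl fun j _ => by ring

lemma auxA_trace_vecMulVec_mul (x y : Fin M → ℂ) (N : Matrix (Fin M) (Fin M) ℂ) :
    (vecMulVec x y * N).trace = y ⬝ᵥ (N *ᵥ x) := by
  simp only [trace, diag_apply, mul_apply, vecMulVec_apply, dotProduct, mulVec, Finset.mul_sum]
  rw [Finset.sum_comm]
  exact Finset.sum_congr rfl fun j _ => Finset.sum_congr rfl fun i _ => by ring

lemma auxA_posSemidef_vecMulVec (x : Fin M → ℂ) : (vecMulVec x (star x)).PosSemidef := by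
  refine Matrix.PosSemidef.of_dotProduct_mulVec_nonneg ?_ ?_
  · ext i j
    simp [vecMulVec_apply, conjTranspose_apply, mul_comm]
  · intro y
    rw [auxA_vecMulVec_mulVec, dotProduct_smul, smul_eq_mul]
    have h : star y ⬝ᵥ x = star (star x ⬝ᵥ y) := by
      simp [dotProduct, Finset.sum_congr, mul_comm]
    rw [h]
    exact mul_star_self_nonneg _

lemma auxA_posDef_shift {B : Matrix (Fin M) (Fin M) ℂ} (hB : B.PosSemidef)
    {z : ℝ} (hz : z < 0) : (B - (z : ℂ) • 1).PosDef := by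
  have h1 : B - (z : ℂ) • 1 = B + (((-z : ℝ) : ℂ)) • 1 := by
    push_cast
    rw [sub_eq_add_neg, ← neg_smul]
  rw [h1]
  refine Matrix.PosDef.posSemidef_add hB ?_
  rw [smul_one_eq_diagonal]
  exact Matrix.PosDef.diagonal fun _ => Complex.zero_lt_real.mpr (by linarith)

/-- Rank-1 perturbation lemma: for `z < 0`, `B` Hermitian positive semidefinite and
any matrix `A`, the matrices `B − z I` and `B + x xᴴ − z I` are invertible and
`|tr(((B − z I)⁻¹ − (B + x xᴴ − z I)⁻¹) A)| ≤ ‖A‖ / |z|`, where `‖A‖` is the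
spectral norm. -/
theorem stmt_9 (M : ℕ) (z : ℝ) (hz : z < 0)
    (B : Matrix (Fin M) (Fin M) ℂ) (hB : B.PosSemidef)
    (A : Matrix (Fin M) (Fin M) ℂ) (x : Fin M → ℂ) :
    IsUnit (B - (z : ℂ) • 1).det ∧
    IsUnit (B + vecMulVec x (star x) - (z : ℂ) • 1).det ∧
    ‖(((B - (z : ℂ) • 1)⁻¹ - (B + vecMulVec x (star x) - (z : ℂ) • 1)⁻¹) * A).trace‖
      ≤ ‖Matrix.toEuclideanCLM (𝕜 := ℂ) A‖ / |z| := by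
  set P : Matrix (Fin M) (Fin M) ℂ := vecMulVec x (star x) with hPdef
  have hPsd : P.PosSemidef := auxA_posSemidef_vecMulVec x
  set R₀ : Matrix (Fin M) (Fin M) ℂ := B - (z : ℂ) • 1 with hR₀def
  set B₂ : Matrix (Fin M) (Fin M) ℂ := B + P - (z : ℂ) • 1 with hB₂def
  have h1 : R₀.PosDef := auxA_posDef_shift hB hz
  have h2 : B₂.PosDef := auxA_posDef_shift (hB.add hPsd) hz
  have hu1 : IsUnit R₀.det := h1.det_pos.ne'.isUnit
  have hu2 : IsUnit B₂.det := h2.det_pos.ne'.isUnit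
  refine ⟨hu1, hu2, ?_⟩
  -- notation
  set R : Matrix (Fin M) (Fin M) ℂ := R₀⁻¹ with hRdef
  set S : Matrix (Fin M) (Fin M) ℂ := B₂⁻¹ with hSdef
  set u : Fin M → ℂ := R *ᵥ x with hudef
  set c : ℂ := star x ⬝ᵥ u with hcdef
  have hRpd : R.PosDef := h1.inv
  have hRH : Rᴴ = R := hRpd.isHermitian
  -- c is real and nonnegative
  have hc0 : 0 ≤ c := by
    simpa [hcdef, hudef] using hRpd.posSemidef.dotProduct_mulVec_nonneg x
  obtain ⟨hcre, hcim⟩ := Complex.nonneg_iff.mp hc0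
  have hcreal : c = ((c.re : ℝ) : ℂ) := by
    exact Complex.ext (by simp) (by simpa using hcim.symm)
  set cr : ℝ := c.re with hcrdef
  have h1c : ((1 : ℂ) + c) = (((1 + cr : ℝ)) : ℂ) := by
    rw [hcreal]; push_cast; ring
  have h1crpos : (0 : ℝ) < 1 + cr := by linarith
  have h1cne : ((1 : ℂ) + c) ≠ 0 := by
    rw [h1c]
    exact_mod_cast Complex.ofReal_ne_zero.mpr (by linarith)
  -- rank one update of the resolvent
  have hdiff : R - S = S * P * R := by
    have e : B₂ - R₀ = P := by rw [hB₂def, hR₀def]; abel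
    rw [hRdef, hSdef, ← e, mul_sub, Matrix.nonsing_inv_mul _ hu2, sub_mul, one_mul,
      mul_assoc, Matrix.mul_nonsing_inv _ hu1, mul_one]
  -- S x = (1+c)⁻¹ • u
  have hkey : B₂ *ᵥ u = ((1 : ℂ) + c) • x := by
    rw [hudef, mulVec_mulVec]
    have hBR : B₂ * R = 1 + P * R := by
      rw [show B₂ = R₀ + P by rw [hB₂def, hR₀def]; abel, add_mul, hRdef,
        Matrix.mul_nonsing_inv _ hu1]
    rw [hBR, add_mulVec, one_mulVec, ← mulVec_mulVec, hPdef, auxA_vecMulVec_mulVec,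
      add_smul, one_smul]
  have hSu : u = ((1 : ℂ) + c) • (S *ᵥ x) := by
    have h := congrArg (fun v => S *ᵥ v) hkey
    simpa [mulVec_mulVec, hSdef, Matrix.nonsing_inv_mul _ hu2, one_mulVec,
      mulVec_smul] using h
  have hSx : S *ᵥ x = ((1 : ℂ) + c)⁻¹ • u := by
    rw [hSu, smul_smul, inv_mul_cancel₀ h1cne, one_smul]
  -- trace identity
  have htr : ((R - S) * A).trace = ((1 : ℂ) + c)⁻¹ * (star u ⬝ᵥ (A *ᵥ u)) := by
    rw [hdiff, mul_assoc, mul_assoc, Matrix.trace_mul_comm, mul_assoc, hPdef,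
      auxA_trace_vecMulVec_mul, ← mulVec_mulVec, hSx, mulVec_smul, dotProduct_smul,
      smul_eq_mul]
    congr 1
    rw [← mulVec_mulVec, Matrix.dotProduct_mulVec,
      show star x ᵥ* R = star u by rw [hudef, star_mulVec, hRH]]
  -- Euclidean space vector
  set u' : EuclideanSpace ℂ (Fin M) := (WithLp.equiv 2 (Fin M → ℂ)).symm u with hu'def
  have hinner : star u ⬝ᵥ (A *ᵥ u) = (inner ℂ (u') (Matrix.toEuclideanCLM (𝕜 := ℂ) A u') : ℂ) := by
    rw [hu'def, WithLp.equiv_symm_apply, toEuclideanCLM_toLp, EuclideanSpace.inner_toLp_toLp,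
      dotProduct_comm]
  have habs : ‖(star u ⬝ᵥ (A *ᵥ u))‖
      ≤ ‖Matrix.toEuclideanCLM (𝕜 := ℂ) A‖ * ‖u'‖ ^ 2 := by
    rw [hinner]
    calc ‖(inner ℂ (u') (Matrix.toEuclideanCLM (𝕜 := ℂ) A u') : ℂ)‖
        ≤ ‖u'‖ * ‖Matrix.toEuclideanCLM (𝕜 := ℂ) A u'‖ := norm_inner_le_norm _ _
      _ ≤ ‖u'‖ * (‖Matrix.toEuclideanCLM (𝕜 := ℂ) A‖ * ‖u'‖) := by
          gcongr
          exact (Matrix.toEuclideanCLM (𝕜 := ℂ) A).le_opNorm u'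
      _ = ‖Matrix.toEuclideanCLM (𝕜 := ℂ) A‖ * ‖u'‖ ^ 2 := by ring
  have hnormu : star u ⬝ᵥ u = (((‖u'‖ : ℝ) ^ 2 : ℝ) : ℂ) := by
    rw [show star u ⬝ᵥ u = (inner ℂ (u') (u') : ℂ) from by
        rw [hu'def, WithLp.equiv_symm_apply, EuclideanSpace.inner_toLp_toLp, dotProduct_comm],
      inner_self_eq_norm_sq_to_K]
    norm_cast
  -- express c via u
  have hx : R₀ *ᵥ u = x := by
    rw [hudef, mulVec_mulVec, Matrix.mul_nonsing_inv _ hu1, one_mulVec]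
  have hcu : c = star u ⬝ᵥ (B *ᵥ u) - (z : ℂ) * (star u ⬝ᵥ u) := by
    rw [hcdef, ← hx, star_mulVec, h1.isHermitian, ← Matrix.dotProduct_mulVec,
      show R₀ *ᵥ u = B *ᵥ u - (z : ℂ) • u by
        rw [hR₀def, sub_mulVec, smul_mulVec, one_mulVec],
      dotProduct_sub, dotProduct_smul, smul_eq_mul]
  have hBu : 0 ≤ (star u ⬝ᵥ (B *ᵥ u)).re := (Complex.nonneg_iff.mp (hB.dotProduct_mulVec_nonneg u)).1
  have hcrge : |z| * ‖u'‖ ^ 2 ≤ cr := by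
    have := congrArg Complex.re hcu
    rw [hnormu] at this
    simp only [Complex.sub_re, Complex.mul_re, Complex.ofReal_re, Complex.ofReal_im] at this
    rw [abs_of_neg hz]
    nlinarith [this, hBu]
  -- final estimate
  rw [htr, norm_mul, norm_inv, h1c, Complex.norm_real, Real.norm_eq_abs, abs_of_pos h1crpos]
  have hzpos : (0 : ℝ) < |z| := abs_pos.mpr hz.ne
  have ha : (0 : ℝ) ≤ ‖Matrix.toEuclideanCLM (𝕜 := ℂ) A‖ := norm_nonneg _
  calc (1 + cr)⁻¹ * ‖(star u ⬝ᵥ (A *ᵥ u))‖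
      ≤ (1 + cr)⁻¹ * (‖Matrix.toEuclideanCLM (𝕜 := ℂ) A‖ * ‖u'‖ ^ 2) :=
        mul_le_mul_of_nonneg_left habs (inv_nonneg.mpr h1crpos.le)
    _ ≤ (1 + cr)⁻¹ * (‖Matrix.toEuclideanCLM (𝕜 := ℂ) A‖ * (cr / |z|)) :=
        mul_le_mul_of_nonneg_left
          (mul_le_mul_of_nonneg_left ((le_div_iff₀' hzpos).mpr hcrge) ha)
          (inv_nonneg.mpr h1crpos.le)
    _ = ‖Matrix.toEuclideanCLM (𝕜 := ℂ) A‖ / |z| * (cr / (1 + cr)) := by ring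
    _ ≤ ‖Matrix.toEuclideanCLM (𝕜 := ℂ) A‖ / |z| * 1 :=
        mul_le_mul_of_nonneg_left ((div_le_one h1crpos).mpr (by linarith)) (div_nonneg ha hzpos.le)
    _ = ‖Matrix.toEuclideanCLM (𝕜 := ℂ) A‖ / |z| := mul_one _
end

section
/- Let C be an M × M Hermitian positive definite complex matrix and let u, v ∈ ℂ^M. Then C + u·uᴴ + v·vᴴ is invertible, the real number D := (1 + uᴴC⁻¹u)(1 + vᴴC⁻¹v) − |uᴴC⁻¹v|² is strictly positive, and uᴴ(C + u·uᴴ + v·vᴴ)⁻¹v = uᴴC⁻¹v / D. -/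
open Matrix
open scoped ComplexOrder

namespace Matrix

section Field

variable {K n : Type*} [Field K] [Fintype n] [DecidableEq n]

theorem add_vecMulVec_add_vecMulVec_mulVec_inv_mulVec {C : Matrix n n K} (hC : IsUnit C.det)
    (u u' v v' w : n → K) :
    (C + vecMulVec u u' + vecMulVec v v') *ᵥ (C⁻¹ *ᵥ w)
      = w + (u' ⬝ᵥ C⁻¹ *ᵥ w) • u + (v' ⬝ᵥ C⁻¹ *ᵥ w) • v := by
  rw [add_mulVec, add_mulVec, mulVec_mulVec, mul_nonsing_inv C hC, one_mulVec, vecMulVec_mulVec,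
    vecMulVec_mulVec, op_smul_eq_smul, op_smul_eq_smul]

/-- Two Sherman–Morrison steps at once: with `a = u'C⁻¹u`, `b = u'C⁻¹v` and `D` the
denominator, the solution of `(C + uu' + vv') x = v` is `D⁻¹ ((1 + a) C⁻¹v - b C⁻¹u)`. -/
theorem dotProduct_inv_add_vecMulVec_add_vecMulVec_mulVec {C : Matrix n n K}
    (hC : IsUnit C.det) {u u' v v' : n → K}
    (hA : IsUnit (C + vecMulVec u u' + vecMulVec v v').det)
    (hD : (1 + u' ⬝ᵥ C⁻¹ *ᵥ u) * (1 + v' ⬝ᵥ C⁻¹ *ᵥ v)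
      - (u' ⬝ᵥ C⁻¹ *ᵥ v) * (v' ⬝ᵥ C⁻¹ *ᵥ u) ≠ 0) :
    u' ⬝ᵥ (C + vecMulVec u u' + vecMulVec v v')⁻¹ *ᵥ v
      = (u' ⬝ᵥ C⁻¹ *ᵥ v) / ((1 + u' ⬝ᵥ C⁻¹ *ᵥ u) * (1 + v' ⬝ᵥ C⁻¹ *ᵥ v)
        - (u' ⬝ᵥ C⁻¹ *ᵥ v) * (v' ⬝ᵥ C⁻¹ *ᵥ u)) := by
  set A := C + vecMulVec u u' + vecMulVec v v'
  set a := u' ⬝ᵥ C⁻¹ *ᵥ u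
  set b := u' ⬝ᵥ C⁻¹ *ᵥ v
  set c := v' ⬝ᵥ C⁻¹ *ᵥ v
  set D := (1 + a) * (1 + c) - b * (v' ⬝ᵥ C⁻¹ *ᵥ u)
  set x := D⁻¹ • ((1 + a) • (C⁻¹ *ᵥ v) - b • (C⁻¹ *ᵥ u))
  have hAx : A *ᵥ x = v := by
    have hDv : A *ᵥ ((1 + a) • (C⁻¹ *ᵥ v) - b • (C⁻¹ *ᵥ u)) = D • v := by
      simp only [A, mulVec_smul, mulVec_sub, add_vecMulVec_add_vecMulVec_mulVec_inv_mulVec hC]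
      module
    rw [mulVec_smul, hDv, inv_smul_smul₀ hD]
  have hx : A⁻¹ *ᵥ v = x := by
    rw [← hAx, mulVec_mulVec, nonsing_inv_mul A hA, one_mulVec]
  rw [hx]
  simp only [x, dotProduct_smul, dotProduct_sub, smul_eq_mul]
  field_simp
  ring

end Field

section RCLike

variable {𝕜 n : Type*} [RCLike 𝕜] [Fintype n]

theorem IsHermitian.star_star_dotProduct_mulVec {B : Matrix n n 𝕜} (hB : B.IsHermitian)
    (x y : n → 𝕜) : star (star x ⬝ᵥ B *ᵥ y) = star y ⬝ᵥ B *ᵥ x := by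
  rw [star_dotProduct, star_star, star_mulVec, dotProduct_mulVec, hB.eq]

theorem PosSemidef.norm_star_dotProduct_mulVec_sq_le {B : Matrix n n 𝕜} (hB : B.PosSemidef)
    (x y : n → 𝕜) :
    ‖star x ⬝ᵥ B *ᵥ y‖ ^ 2
      ≤ RCLike.re (star x ⬝ᵥ B *ᵥ x) * RCLike.re (star y ⬝ᵥ B *ᵥ y) := by
  let := B.toSeminormedAddCommGroup hB
  let := B.toInnerProductSpace hB
  have hinner : ∀ x y : n → 𝕜, inner 𝕜 x y = star x ⬝ᵥ B *ᵥ y :=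
    fun _ _ => dotProduct_comm _ _
  have := inner_mul_inner_self_le (𝕜 := 𝕜) x y
  rwa [norm_inner_symm y x, ← sq, hinner, hinner, hinner] at this

end RCLike

end Matrix

/-- Double rank-one quadratic-form identity: for `C` Hermitian positive definite and
`u, v ∈ ℂ^M`, the matrix `C + u uᴴ + v vᴴ` is invertible, the quantity
`D = (1 + uᴴ C⁻¹ u)(1 + vᴴ C⁻¹ v) − |uᴴ C⁻¹ v|²` is a strictly positive real number,
and `uᴴ (C + u uᴴ + v vᴴ)⁻¹ v = uᴴ C⁻¹ v / D`. -/
theorem stmt_10 (M : ℕ) (C : Matrix (Fin M) (Fin M) ℂ) (hC : C.PosDef)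
    (u v : Fin M → ℂ) :
    IsUnit (C + vecMulVec u (star u) + vecMulVec v (star v)).det ∧
    ((1 + star u ⬝ᵥ C⁻¹ *ᵥ u) * (1 + star v ⬝ᵥ C⁻¹ *ᵥ v)
        - (‖star u ⬝ᵥ C⁻¹ *ᵥ v‖ : ℂ) ^ 2).im = 0 ∧
    0 < ((1 + star u ⬝ᵥ C⁻¹ *ᵥ u) * (1 + star v ⬝ᵥ C⁻¹ *ᵥ v)
        - (‖star u ⬝ᵥ C⁻¹ *ᵥ v‖ : ℂ) ^ 2).re ∧
    star u ⬝ᵥ (C + vecMulVec u (star u) + vecMulVec v (star v))⁻¹ *ᵥ v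
      = (star u ⬝ᵥ C⁻¹ *ᵥ v) /
        ((1 + star u ⬝ᵥ C⁻¹ *ᵥ u) * (1 + star v ⬝ᵥ C⁻¹ *ᵥ v)
          - (‖star u ⬝ᵥ C⁻¹ *ᵥ v‖ : ℂ) ^ 2) := by
  have hCi := hC.inv
  set a := star u ⬝ᵥ C⁻¹ *ᵥ u
  set b := star u ⬝ᵥ C⁻¹ *ᵥ v
  set c := star v ⬝ᵥ C⁻¹ *ᵥ v
  have ha : (a.re : ℂ) = a :=
    Complex.conj_eq_iff_re.mp (hCi.isHermitian.star_star_dotProduct_mulVec u u)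
  have hc : (c.re : ℂ) = c :=
    Complex.conj_eq_iff_re.mp (hCi.isHermitian.star_star_dotProduct_mulVec v v)
  have hD : (1 + a) * (1 + c) - (‖b‖ : ℂ) ^ 2
      = ((1 + a.re) * (1 + c.re) - ‖b‖ ^ 2 : ℝ) := by
    push_cast
    rw [ha, hc]
  have hD_pos : 0 < (1 + a.re) * (1 + c.re) - ‖b‖ ^ 2 := by
    have hcs := hCi.posSemidef.norm_star_dotProduct_mulVec_sq_le u v
    have ha0 := hCi.posSemidef.re_dotProduct_nonneg u
    have hc0 := hCi.posSemidef.re_dotProduct_nonneg v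
    simp only [RCLike.re_to_complex] at hcs ha0 hc0
    nlinarith
  have hA : (C + vecMulVec u (star u) + vecMulVec v (star v)).PosDef :=
    (hC.add_posSemidef (posSemidef_vecMulVec_self_star u)).add_posSemidef
      (posSemidef_vecMulVec_self_star v)
  have hA_det := (isUnit_iff_isUnit_det _).mp hA.isUnit
  refine ⟨hA_det, by rw [hD, Complex.ofReal_im], by rwa [hD, Complex.ofReal_re], ?_⟩
  have hb : (‖b‖ : ℂ) ^ 2 = b * (star v ⬝ᵥ C⁻¹ *ᵥ u) := by
    rw [← hCi.isHermitian.star_star_dotProduct_mulVec u v]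
    exact (Complex.mul_conj' b).symm
  rw [hb] at hD ⊢
  refine dotProduct_inv_add_vecMulVec_add_vecMulVec_mulVec
    ((isUnit_iff_isUnit_det _).mp hC.isUnit) hA_det ?_
  rw [hD]
  exact_mod_cast hD_pos.ne'
end

section
/- Let M, K ≥ 1, let D_1, …, D_K and S be M × M Hermitian positive semidefinite complex matrices, and let ρ > 0. Define recursively e_k^{(0)} = 1/ρ for all k, and for t ≥ 1, e_k^{(t)} = (1/M)·tr( D_k · ( (1/M)·Σ_{j=1}^{K} D_j/(1 + e_j^{(t−1)}) + S + ρ·I )⁻¹ ). Then for each k the sequence (e_k^{(t)})_{t≥0} converges to a nonnegative limit e_k(ρ), and the limits satisfy the fixed-point system e_k(ρ) = (1/M)·tr( D_k · ( (1/M)·Σ_{j=1}^{K} D_j/(1 + e_j(ρ)) + S + ρ·I )⁻¹ ) for every k. -/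
/-!
The map `T e k = (1/M) tr (D_k A(e)⁻¹)`, with `A(e) = (1/M) ∑_j D_j / (1 + e_j) + S + ρ I`, is a
standard interference function in the sense of Yates on the nonnegative orthant. It is nonnegative
and bounded; it is monotone because `A(e)` decreases in the Loewner order as `e` grows and matrix
inversion is operator antitone; and it is strictly scalable: `T (a e) k < a T e k` for `a > 1`
unless `D_k = 0`, in which case `T · k` vanishes identically.

Iterating a monotone map from `0` and from a point above its range gives an increasing and a
decreasing sequence which bracket the iteration started at `1/ρ`; both converge, by continuity to
fixed points. Strict scalability forces two ordered fixed points `x ≤ y` to coincide: for the least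
`a` with `y ≤ a x`, if `a > 1` then at a coordinate where it is attained
`y_k = T y k ≤ T (a x) k < a x_k = y_k`.
-/

open Matrix Finset Filter
open scoped ComplexOrder

/-- The fixed-point iteration of the deterministic-equivalent theorem:
`e_k^{(0)} = 1/ρ` and
`e_k^{(t+1)} = (1/M) tr (D_k ((1/M) ∑_j D_j / (1 + e_j^{(t)}) + S + ρ I)⁻¹)`. -/
noncomputable def detEquivIter (M K : ℕ)
    (D : Fin K → Matrix (Fin M) (Fin M) ℂ) (S : Matrix (Fin M) (Fin M) ℂ)
    (ρ : ℝ) : ℕ → Fin K → ℂ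
  | 0 => fun _ => ((ρ : ℂ))⁻¹
  | (t + 1) => fun k =>
      (M : ℂ)⁻¹ *
        (D k *
          ((M : ℂ)⁻¹ • ∑ j, (1 + detEquivIter M K D S ρ t j)⁻¹ • D j
            + S + (ρ : ℂ) • 1)⁻¹).trace

open Set Function

section MonotoneIterate

variable {α : Type*} [Preorder α] {f : α → α} {s : Set α}

theorem MonotoneOn.iterate_le_iterate (hf : MonotoneOn f s) (hs : MapsTo f s s) {x y : α}
    (hx : x ∈ s) (hy : y ∈ s) (hxy : x ≤ y) (n : ℕ) : f^[n] x ≤ f^[n] y := by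
  induction n with
  | zero => exact hxy
  | succ n ih =>
    rw [iterate_succ_apply', iterate_succ_apply']
    exact hf (hs.iterate n hx) (hs.iterate n hy) ih

theorem MonotoneOn.monotone_iterate_of_le_map (hf : MonotoneOn f s) (hs : MapsTo f s s)
    {x : α} (hx : x ∈ s) (hxf : x ≤ f x) : Monotone fun n => f^[n] x :=
  monotone_nat_of_le_succ fun n => by
    simpa only [iterate_succ_apply] using hf.iterate_le_iterate hs hx (hs hx) hxf n

theorem MonotoneOn.antitone_iterate_of_map_le (hf : MonotoneOn f s) (hs : MapsTo f s s)
    {x : α} (hx : x ∈ s) (hfx : f x ≤ x) : Antitone fun n => f^[n] x :=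
  antitone_nat_of_succ_le fun n => by
    simpa only [iterate_succ_apply] using hf.iterate_le_iterate hs (hs hx) hx hfx n

end MonotoneIterate

section StandardInterference

variable {ι : Type*} {T : (ι → ℝ) → ι → ℝ}

theorem nonneg_isFixedPt_of_tendsto_iterate (hT : MapsTo T (Set.Ici 0) (Set.Ici 0))
    (hcont : ∀ e, 0 ≤ e → ContinuousAt T e) {x e : ι → ℝ} (hx : 0 ≤ x)
    (h : Tendsto (fun n => T^[n] x) atTop (nhds e)) : 0 ≤ e ∧ IsFixedPt T e := by
  have he : 0 ≤ e := ge_of_tendsto' h fun n => hT.iterate n hx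
  exact ⟨he, isFixedPt_of_tendsto_iterate h (hcont e he)⟩

theorem apply_pos_of_smul_lt (hT : MapsTo T (Set.Ici 0) (Set.Ici 0)) {k : ι}
    (hscal : ∀ e, 0 ≤ e → ∀ a : ℝ, 1 < a → T (a • e) k < a * T e k) {e : ι → ℝ}
    (he : 0 ≤ e) : 0 < T e k := by
  have h₂ := hscal e he 2 one_lt_two
  have : (0 : ℝ) ≤ T ((2 : ℝ) • e) k := hT (smul_nonneg zero_le_two he) k
  linarith

theorem eq_of_isFixedPt_of_le [Finite ι] (hT : MapsTo T (Set.Ici 0) (Set.Ici 0))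
    (hmono : MonotoneOn T (Set.Ici 0))
    (hscal : ∀ k, (∀ e, 0 ≤ e → T e k = 0) ∨
      ∀ e, 0 ≤ e → ∀ a : ℝ, 1 < a → T (a • e) k < a * T e k)
    {x y : ι → ℝ} (hx₀ : 0 ≤ x) (hx : IsFixedPt T x) (hy : IsFixedPt T y) (hxy : x ≤ y) :
    x = y := by
  have hy₀ : 0 ≤ y := hx₀.trans hxy
  have hsupp k : (x k = 0 ∧ y k = 0) ∨ 0 < x k :=
    (hscal k).imp (fun hzero => ⟨congrFun hx k ▸ hzero x hx₀, congrFun hy k ▸ hzero y hy₀⟩)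
      fun hpos => congrFun hx k ▸ apply_pos_of_smul_lt hT hpos hx₀
  by_contra hne
  obtain ⟨k₀, hk₀⟩ : ∃ k, x k < y k := by
    by_contra! h
    exact hne (le_antisymm hxy h)
  have : Nonempty ι := ⟨k₀⟩
  obtain ⟨k₁, hk₁⟩ := Finite.exists_max fun k => y k / x k
  set a := y k₁ / x k₁
  have ha : 1 < a := by
    rcases hsupp k₀ with h | h
    · linarith [h.1, h.2]
    · exact (one_lt_div h).mpr hk₀ |>.trans_le (hk₁ k₀)
  have hyx : y ≤ a • x := fun k => by
    rcases hsupp k with h | h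
    · simp [h.1, h.2]
    · exact (div_le_iff₀ h).mp (hk₁ k)
  rcases hscal k₁ with hzero | hpos
  · have : a = 0 := by simp [a, ← congrFun hx k₁, hzero x hx₀]
    linarith
  · have hx₁ : 0 < x k₁ := congrFun hx k₁ ▸ apply_pos_of_smul_lt hT hpos hx₀
    refine lt_irrefl (y k₁) ?_
    calc y k₁ = T y k₁ := (congrFun hy k₁).symm
      _ ≤ T (a • x) k₁ := hmono hy₀ (smul_nonneg (by linarith) hx₀) hyx k₁
      _ < a * T x k₁ := hpos x hx₀ a ha
      _ = y k₁ := by rw [congrFun hx k₁]; exact div_mul_cancel₀ _ hx₁.ne'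

theorem exists_isFixedPt_tendsto_iterate [Finite ι] (hT : MapsTo T (Set.Ici 0) (Set.Ici 0))
    (hmono : MonotoneOn T (Set.Ici 0)) (hbdd : BddAbove (T '' Set.Ici 0))
    (hcont : ∀ e, 0 ≤ e → ContinuousAt T e)
    (hscal : ∀ k, (∀ e, 0 ≤ e → T e k = 0) ∨
      ∀ e, 0 ≤ e → ∀ a : ℝ, 1 < a → T (a • e) k < a * T e k)
    {x₀ : ι → ℝ} (hx₀ : 0 ≤ x₀) :
    ∃ e, 0 ≤ e ∧ IsFixedPt T e ∧ Tendsto (fun n => T^[n] x₀) atTop (nhds e) := by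
  obtain ⟨B, hB⟩ := hbdd
  have h₀ : (0 : ι → ℝ) ∈ Set.Ici 0 := Set.mem_Ici.mpr le_rfl
  set v₀ := x₀ ⊔ B
  have hv₀ : 0 ≤ v₀ := le_sup_of_le_left hx₀
  have hu : Monotone fun n => T^[n] 0 :=
    hmono.monotone_iterate_of_le_map hT h₀ (hT h₀)
  have hv : Antitone fun n => T^[n] v₀ :=
    hmono.antitone_iterate_of_map_le hT hv₀ ((hB (mem_image_of_mem T hv₀)).trans le_sup_right)
  have huv n : T^[n] 0 ≤ T^[n] v₀ := hmono.iterate_le_iterate hT h₀ hv₀ hv₀ n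
  have hlim_u := tendsto_atTop_ciSup hu
    ⟨v₀, forall_mem_range.mpr fun n => (huv n).trans (hv n.zero_le)⟩
  have hlim_v := tendsto_atTop_ciInf hv ⟨0, forall_mem_range.mpr fun n => hT.iterate n hv₀⟩
  obtain ⟨hu₀, hu_fix⟩ := nonneg_isFixedPt_of_tendsto_iterate hT hcont le_rfl hlim_u
  obtain ⟨-, hv_fix⟩ := nonneg_isFixedPt_of_tendsto_iterate hT hcont hv₀ hlim_v
  have huv_eq := eq_of_isFixedPt_of_le hT hmono hscal hu₀ hu_fix hv_fix
    (le_of_tendsto_of_tendsto' hlim_u hlim_v huv)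
  refine ⟨_, hu₀, hu_fix, tendsto_pi_nhds.mpr fun k => ?_⟩
  refine tendsto_of_tendsto_of_tendsto_of_le_of_le (tendsto_pi_nhds.mp hlim_u k)
    (huv_eq ▸ tendsto_pi_nhds.mp hlim_v k) (fun n => ?_) (fun n => ?_)
  · exact hmono.iterate_le_iterate hT h₀ hx₀ hx₀ n k
  · exact hmono.iterate_le_iterate hT hx₀ hv₀ le_sup_left n k

end StandardInterference

open scoped MatrixOrder

namespace Matrix

variable {n : Type*} [Fintype n] [DecidableEq n]

lemma inv_le_inv_of_le {A B : Matrix n n ℂ} (hA : A.PosDef) (hAB : A ≤ B) : B⁻¹ ≤ A⁻¹ := by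
  open scoped Norms.L2Operator in
  rw [nonsing_inv_eq_ringInverse, nonsing_inv_eq_ringInverse]
  exact CStarAlgebra.ringInverse_le_ringInverse hAB (isStrictlyPositive_iff_posDef.mpr hA)

lemma trace_mul_eq_trace_sqrt_mul_mul_sqrt (P : Matrix n n ℂ) {X : Matrix n n ℂ} (hX : 0 ≤ X) :
    (P * X).trace = (CFC.sqrt X * P * CFC.sqrt X).trace := by
  conv_lhs => rw [← CFC.sqrt_mul_sqrt_self X hX, ← Matrix.mul_assoc, trace_mul_comm]
  rw [Matrix.mul_assoc]

lemma sqrt_mul_mul_sqrt_nonneg {P : Matrix n n ℂ} (hP : 0 ≤ P) (X : Matrix n n ℂ) :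
    0 ≤ CFC.sqrt X * P * CFC.sqrt X := by
  simpa [(CFC.sqrt_nonneg X).isSelfAdjoint.star_eq] using
    star_left_conjugate_nonneg hP (CFC.sqrt X)

lemma trace_mul_nonneg {P X : Matrix n n ℂ} (hP : 0 ≤ P) (hX : 0 ≤ X) : 0 ≤ (P * X).trace := by
  rw [trace_mul_eq_trace_sqrt_mul_mul_sqrt P hX]
  exact (nonneg_iff_posSemidef.mp (sqrt_mul_mul_sqrt_nonneg hP X)).trace_nonneg

lemma trace_mul_le_trace_mul {P X Y : Matrix n n ℂ} (hP : 0 ≤ P) (hXY : X ≤ Y) :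
    (P * X).trace ≤ (P * Y).trace := by
  have := trace_mul_nonneg hP (sub_nonneg.mpr hXY)
  rwa [Matrix.mul_sub, trace_sub, sub_nonneg] at this

lemma trace_mul_pos {P X : Matrix n n ℂ} (hP : 0 ≤ P) (hP0 : P ≠ 0) (hX : X.PosDef) :
    0 < (P * X).trace := by
  have hX' : IsStrictlyPositive X := isStrictlyPositive_iff_posDef.mpr hX
  have hconj := nonneg_iff_posSemidef.mp (sqrt_mul_mul_sqrt_nonneg hP X)
  rw [trace_mul_eq_trace_sqrt_mul_mul_sqrt P hX'.nonneg]
  refine hconj.trace_nonneg.lt_of_ne fun h => hP0 ?_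
  have hu : IsUnit (CFC.sqrt X) := CFC.isUnit_sqrt_iff_isStrictlyPositive.mpr hX'
  have := hconj.trace_eq_zero_iff.mp h.symm
  rwa [Matrix.mul_assoc, hu.mul_right_eq_zero, hu.mul_left_eq_zero] at this

end Matrix

section DetEquiv

variable {M K : ℕ} (D : Fin K → Matrix (Fin M) (Fin M) ℂ) (S : Matrix (Fin M) (Fin M) ℂ)
  (ρ : ℝ)

noncomputable def detEquivMatrix (e : Fin K → ℝ) : Matrix (Fin M) (Fin M) ℂ :=
  (M : ℂ)⁻¹ • ∑ j, ((1 : ℂ) + e j)⁻¹ • D j + S + (ρ : ℂ) • 1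

noncomputable def detEquivMap (e : Fin K → ℝ) (k : Fin K) : ℝ :=
  ((M : ℂ)⁻¹ * (D k * (detEquivMatrix D S ρ e)⁻¹).trace).re

variable {D S ρ}

lemma smul_detEquivMatrix_le (hD : ∀ k, (D k).PosSemidef) (hS : S.PosSemidef) (hρ : 0 ≤ ρ)
    {e e' : Fin K → ℝ} {γ : ℝ} (hγ₁ : γ ≤ 1)
    (h : ∀ j, γ * (1 + e j)⁻¹ ≤ (1 + e' j)⁻¹) :
    (γ : ℂ) • detEquivMatrix D S ρ e ≤ detEquivMatrix D S ρ e' := by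
  have key : detEquivMatrix D S ρ e' - (γ : ℂ) • detEquivMatrix D S ρ e =
      (M : ℂ)⁻¹ • ∑ j, (((1 + e' j)⁻¹ - γ * (1 + e j)⁻¹ : ℝ) : ℂ) • D j
        + ((1 - γ : ℝ) : ℂ) • S + (((1 - γ) * ρ : ℝ) : ℂ) • 1 := by
    push_cast
    simp only [detEquivMatrix, sub_smul, Finset.sum_sub_distrib, mul_smul, ← Finset.smul_sum]
    module
  rw [← sub_nonneg, key]
  have hM : (0 : ℂ) ≤ (M : ℂ)⁻¹ := by simp
  refine add_nonneg (add_nonneg (smul_nonneg hM (Finset.sum_nonneg fun j _ => ?_)) ?_) ?_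
  · exact smul_nonneg (by exact_mod_cast sub_nonneg.mpr (h j))
      (nonneg_iff_posSemidef.mpr (hD j))
  · exact smul_nonneg (by exact_mod_cast sub_nonneg.mpr hγ₁) (nonneg_iff_posSemidef.mpr hS)
  · exact smul_nonneg (by exact_mod_cast mul_nonneg (sub_nonneg.mpr hγ₁) hρ) zero_le_one

lemma smul_one_le_detEquivMatrix (hD : ∀ k, (D k).PosSemidef) (hS : S.PosSemidef)
    {e : Fin K → ℝ} (he : 0 ≤ e) : (ρ : ℂ) • 1 ≤ detEquivMatrix D S ρ e := by
  rw [detEquivMatrix, le_add_iff_nonneg_left]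
  refine add_nonneg (smul_nonneg (by simp) (Finset.sum_nonneg fun j _ => ?_))
    (nonneg_iff_posSemidef.mpr hS)
  have hj : (0 : ℝ) ≤ (1 + e j)⁻¹ := inv_nonneg.mpr (by linarith [show (0 : ℝ) ≤ e j from he j])
  exact smul_nonneg (by exact_mod_cast hj) (nonneg_iff_posSemidef.mpr (hD j))

lemma posDef_detEquivMatrix (hD : ∀ k, (D k).PosSemidef) (hS : S.PosSemidef) (hρ : 0 < ρ)
    {e : Fin K → ℝ} (he : 0 ≤ e) : (detEquivMatrix D S ρ e).PosDef := by
  have := (PosDef.one.smul (by exact_mod_cast hρ : (0 : ℂ) < ρ)).add_posSemidef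
    (nonneg_iff_posSemidef.mp (sub_nonneg.mpr (smul_one_le_detEquivMatrix (ρ := ρ) hD hS he)))
  rwa [add_sub_cancel] at this

lemma detEquivMap_trace_nonneg (hD : ∀ k, (D k).PosSemidef) (hS : S.PosSemidef) (hρ : 0 < ρ)
    {e : Fin K → ℝ} (he : 0 ≤ e) (k : Fin K) :
    0 ≤ (M : ℂ)⁻¹ * (D k * (detEquivMatrix D S ρ e)⁻¹).trace :=
  mul_nonneg (by simp) (trace_mul_nonneg (nonneg_iff_posSemidef.mpr (hD k))
    (nonneg_iff_posSemidef.mpr (posDef_detEquivMatrix hD hS hρ he).inv.posSemidef))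

lemma ofReal_detEquivMap (hD : ∀ k, (D k).PosSemidef) (hS : S.PosSemidef) (hρ : 0 < ρ)
    {e : Fin K → ℝ} (he : 0 ≤ e) (k : Fin K) :
    (detEquivMap D S ρ e k : ℂ) = (M : ℂ)⁻¹ * (D k * (detEquivMatrix D S ρ e)⁻¹).trace :=
  (Complex.eq_re_of_ofReal_le (r := 0)
    (by simpa using detEquivMap_trace_nonneg hD hS hρ he k)).symm

lemma mapsTo_detEquivMap (hD : ∀ k, (D k).PosSemidef) (hS : S.PosSemidef) (hρ : 0 < ρ) :
    MapsTo (detEquivMap D S ρ) (Set.Ici 0) (Set.Ici 0) := fun _ he k =>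
  (Complex.le_def.mp (detEquivMap_trace_nonneg hD hS hρ he k)).1

lemma detEquivMap_monotoneOn (hD : ∀ k, (D k).PosSemidef) (hS : S.PosSemidef) (hρ : 0 < ρ) :
    MonotoneOn (detEquivMap D S ρ) (Set.Ici 0) := by
  intro e he e' he' hee' k
  have hA : detEquivMatrix D S ρ e' ≤ detEquivMatrix D S ρ e := by
    simpa using smul_detEquivMatrix_le hD hS hρ.le (γ := 1) le_rfl fun j => by
      simpa using inv_anti₀ (by linarith [show (0 : ℝ) ≤ e j from he j]) (by linarith [hee' j])
  have := trace_mul_le_trace_mul (nonneg_iff_posSemidef.mpr (hD k))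
    (inv_le_inv_of_le (posDef_detEquivMatrix hD hS hρ he') hA)
  exact (Complex.le_def.mp (mul_le_mul_of_nonneg_left this (by simp))).1

lemma bddAbove_detEquivMap_image (hD : ∀ k, (D k).PosSemidef) (hS : S.PosSemidef)
    (hρ : 0 < ρ) : BddAbove (detEquivMap D S ρ '' Set.Ici 0) := by
  refine ⟨fun k => ((M : ℂ)⁻¹ * (D k * ((ρ : ℂ) • 1 : Matrix (Fin M) (Fin M) ℂ)⁻¹).trace).re,
    ?_⟩
  rintro _ ⟨e, he, rfl⟩ k
  have := trace_mul_le_trace_mul (nonneg_iff_posSemidef.mpr (hD k))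
    (inv_le_inv_of_le (PosDef.one.smul (by exact_mod_cast hρ))
      (smul_one_le_detEquivMatrix hD hS he))
  exact (Complex.le_def.mp (mul_le_mul_of_nonneg_left this (by simp))).1

lemma detEquivMap_pos (hD : ∀ k, (D k).PosSemidef) (hS : S.PosSemidef) (hρ : 0 < ρ)
    {e : Fin K → ℝ} (he : 0 ≤ e) {k : Fin K} (hk : D k ≠ 0) : 0 < detEquivMap D S ρ e k := by
  have hM : M ≠ 0 := by
    rintro rfl
    exact hk (Subsingleton.elim _ _)
  have := mul_pos (by simpa [Nat.pos_iff_ne_zero] using hM : (0 : ℂ) < (M : ℂ)⁻¹)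
    (trace_mul_pos (nonneg_iff_posSemidef.mpr (hD k)) hk
      (posDef_detEquivMatrix hD hS hρ he).inv)
  exact (Complex.lt_def.mp this).1

lemma mul_inv_one_add_le_inv_one_add {x m a : ℝ} (hx : 0 ≤ x) (hxm : x ≤ m) (ha : 1 ≤ a) :
    (1 + m) / (1 + a * m) * (1 + x)⁻¹ ≤ (1 + a * x)⁻¹ := by
  have hm : 0 ≤ m := hx.trans hxm
  rw [← div_eq_mul_inv, div_div, div_le_iff₀ (by positivity), inv_mul_eq_div,
    le_div_iff₀ (by positivity)]
  nlinarith [mul_nonneg (sub_nonneg.mpr ha) (sub_nonneg.mpr hxm)]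

lemma detEquivMap_smul_lt (hD : ∀ k, (D k).PosSemidef) (hS : S.PosSemidef) (hρ : 0 < ρ)
    {e : Fin K → ℝ} (he : 0 ≤ e) {k : Fin K} (hk : D k ≠ 0) {a : ℝ} (ha : 1 < a) :
    detEquivMap D S ρ (a • e) k < a * detEquivMap D S ρ e k := by
  -- `A (a • e) ≥ γ • A e` with `γ > a⁻¹`, because `m` bounds every `e j`
  set m := ∑ j, e j
  have hm : 0 ≤ m := Finset.sum_nonneg fun j _ => he j
  set γ := (1 + m) / (1 + a * m)
  have hγ₀ : 0 < γ := by positivity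
  have hγ₁ : γ ≤ 1 := (div_le_one (by positivity)).mpr (by nlinarith)
  have hγa : γ⁻¹ < a := by
    rw [inv_div, div_lt_iff₀ (by positivity)]
    linarith
  have hle : (γ : ℂ) • detEquivMatrix D S ρ e ≤ detEquivMatrix D S ρ (a • e) :=
    smul_detEquivMatrix_le hD hS hρ.le hγ₁ fun j => by
      simpa using mul_inv_one_add_le_inv_one_add (he j)
        (Finset.single_le_sum (fun j _ => he j) (Finset.mem_univ j)) ha.le
  have hA := posDef_detEquivMatrix hD hS hρ he
  have hinv : ((γ : ℂ) • detEquivMatrix D S ρ e)⁻¹ =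
      ((γ⁻¹ : ℝ) : ℂ) • (detEquivMatrix D S ρ e)⁻¹ :=
    inv_eq_left_inv <| by
      rw [smul_mul_smul_comm, nonsing_inv_mul _ (isUnit_iff_ne_zero.mpr hA.det_pos.ne'),
        ← Complex.ofReal_mul, inv_mul_cancel₀ hγ₀.ne', Complex.ofReal_one, one_smul]
  have htr := trace_mul_le_trace_mul (nonneg_iff_posSemidef.mpr (hD k))
    (inv_le_inv_of_le (hA.smul (by exact_mod_cast hγ₀)) hle)
  rw [hinv, Matrix.mul_smul, trace_smul, smul_eq_mul] at htr
  have hle' : detEquivMap D S ρ (a • e) k ≤ γ⁻¹ * detEquivMap D S ρ e k := by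
    have := (Complex.le_def.mp
      (mul_le_mul_of_nonneg_left htr (by simp : (0 : ℂ) ≤ (M : ℂ)⁻¹))).1
    rwa [mul_left_comm, Complex.re_ofReal_mul] at this
  exact hle'.trans_lt (mul_lt_mul_of_pos_right hγa (detEquivMap_pos hD hS hρ he hk))

lemma detEquivMap_eq_zero_or_smul_lt (hD : ∀ k, (D k).PosSemidef) (hS : S.PosSemidef)
    (hρ : 0 < ρ) (k : Fin K) :
    (∀ e, 0 ≤ e → detEquivMap D S ρ e k = 0) ∨
      ∀ e, 0 ≤ e → ∀ a : ℝ, 1 < a →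
        detEquivMap D S ρ (a • e) k < a * detEquivMap D S ρ e k := by
  by_cases hk : D k = 0
  · exact .inl fun e _ => by simp [detEquivMap, hk]
  · exact .inr fun e he a ha => detEquivMap_smul_lt hD hS hρ he hk ha

lemma continuousAt_detEquivMap (hD : ∀ k, (D k).PosSemidef) (hS : S.PosSemidef) (hρ : 0 < ρ)
    {e : Fin K → ℝ} (he : 0 ≤ e) : ContinuousAt (detEquivMap D S ρ) e := by
  have hA : ContinuousAt (detEquivMatrix D S ρ) e := by
    refine ((tendsto_finsetSum _ fun j _ => ?_).const_smul _ |>.add continuousAt_const).add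
      continuousAt_const
    have hne : (1 : ℂ) + e j ≠ 0 := by
      exact_mod_cast (show (0 : ℝ) < 1 + e j by linarith [show (0 : ℝ) ≤ e j from he j]).ne'
    have hj : Continuous fun x : Fin K → ℝ => (1 : ℂ) + x j := by fun_prop
    exact (hj.continuousAt.inv₀ hne).smul continuousAt_const
  have hinv : ContinuousAt (fun e => (detEquivMatrix D S ρ e)⁻¹) e := by
    refine ContinuousAt.comp (continuousAt_matrix_inv _ ?_) hA
    rw [Ring.inverse_eq_inv']
    exact continuousAt_inv₀ (posDef_detEquivMatrix hD hS hρ he).det_pos.ne'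
  refine continuousAt_pi.mpr fun k => ?_
  unfold detEquivMap
  fun_prop

lemma detEquivIter_eq (hD : ∀ k, (D k).PosSemidef) (hS : S.PosSemidef) (hρ : 0 < ρ) (t : ℕ) :
    detEquivIter M K D S ρ t = fun k => ((detEquivMap D S ρ)^[t] (fun _ => ρ⁻¹) k : ℂ) := by
  induction t with
  | zero => funext k; simp [detEquivIter]
  | succ t ih =>
    funext k
    have hx : 0 ≤ (detEquivMap D S ρ)^[t] (fun _ => ρ⁻¹) :=
      (mapsTo_detEquivMap hD hS hρ).iterate t fun _ => (inv_pos.mpr hρ).le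
    rw [Function.iterate_succ_apply', ofReal_detEquivMap hD hS hρ hx, detEquivIter, ih]
    rfl

end DetEquiv

theorem stmt_15_general (M K : ℕ)
    (D : Fin K → Matrix (Fin M) (Fin M) ℂ) (hD : ∀ k, (D k).PosSemidef)
    (S : Matrix (Fin M) (Fin M) ℂ) (hS : S.PosSemidef)
    (ρ : ℝ) (hρ : 0 < ρ) :
    ∃ e : Fin K → ℝ, (∀ k, 0 ≤ e k) ∧
      (∀ k, Tendsto (fun t => detEquivIter M K D S ρ t k) atTop (nhds (e k))) ∧
      ∀ k, (e k : ℂ) =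
        (M : ℂ)⁻¹ *
          (D k *
            ((M : ℂ)⁻¹ • ∑ j, ((1 : ℂ) + e j)⁻¹ • D j + S + (ρ : ℂ) • 1)⁻¹).trace := by
  obtain ⟨e, he, hfix, hlim⟩ := exists_isFixedPt_tendsto_iterate (mapsTo_detEquivMap hD hS hρ)
    (detEquivMap_monotoneOn hD hS hρ) (bddAbove_detEquivMap_image hD hS hρ)
    (fun _ he => continuousAt_detEquivMap hD hS hρ he)
    (detEquivMap_eq_zero_or_smul_lt hD hS hρ) (x₀ := fun _ => ρ⁻¹) fun _ => (inv_pos.mpr hρ).le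
  refine ⟨e, he, fun k => ?_, fun k => ?_⟩
  · simp only [detEquivIter_eq hD hS hρ]
    exact (Complex.continuous_ofReal.tendsto _).comp (tendsto_pi_nhds.mp hlim k)
  · have := ofReal_detEquivMap hD hS hρ he k
    rwa [hfix.eq] at this

/-- The fixed-point sequences `e_k^{(t)}` of the deterministic-equivalent theorem
converge, for each `k`, to a nonnegative limit `e_k(ρ)`, and the limits satisfy the
fixed-point system
`e_k(ρ) = (1/M) tr (D_k ((1/M) ∑_j D_j / (1 + e_j(ρ)) + S + ρ I)⁻¹)`. -/
theorem stmt_15 (M K : ℕ) (hM : 1 ≤ M) (hK : 1 ≤ K)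
    (D : Fin K → Matrix (Fin M) (Fin M) ℂ) (hD : ∀ k, (D k).PosSemidef)
    (S : Matrix (Fin M) (Fin M) ℂ) (hS : S.PosSemidef)
    (ρ : ℝ) (hρ : 0 < ρ) :
    ∃ e : Fin K → ℝ, (∀ k, 0 ≤ e k) ∧
      (∀ k, Tendsto (fun t => detEquivIter M K D S ρ t k) atTop (nhds (e k))) ∧
      ∀ k, (e k : ℂ) =
        (M : ℂ)⁻¹ *
          (D k *
            ((M : ℂ)⁻¹ • ∑ j, ((1 : ℂ) + e j)⁻¹ • D j + S + (ρ : ℂ) • 1)⁻¹).trace :=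
  stmt_15_general M K D hD S hS ρ hρ
end
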